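/- arXiv:2205.11496 — 4 statements merged into one kernel-verified Lean document; each statement's English description precedes it below -/
import Mathlib

section
/- For the Catoni influence function φ, the two-sided quadratic envelope x − x²/2 ≤ φ(x) ≤ x + x²/2 holds for every real number x. -/
/-- The Catoni influence function. -/
noncomputable def catoni (x : ℝ) : ℝ :=
  if x ≤ -1 then -Real.log 2
  else if x ≤ 0 then Real.log (1 + x + x ^ 2 / 2)
  else if x ≤ 1 then -Real.log (1 - x + x ^ 2 / 2)
  else Real.log 2

/-- The two-sided quadratic envelope of the Catoni influence function:
`x − x²/2 ≤ φ(x) ≤ x + x²/2` for every real `x`. -/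
theorem catoni_envelope (x : ℝ) :
    x - x ^ 2 / 2 ≤ catoni x ∧ catoni x ≤ x + x ^ 2 / 2 := by
  have hA : (0:ℝ) < 1 + x + x ^ 2 / 2 := by nlinarith [sq_nonneg (x + 1)]
  have hB : (0:ℝ) < 1 - x + x ^ 2 / 2 := by nlinarith [sq_nonneg (x - 1)]
  have hlogA := Real.log_le_sub_one_of_pos hA
  have hlogB := Real.log_le_sub_one_of_pos hB
  have hAB : (1:ℝ) ≤ (1 + x + x ^ 2 / 2) * (1 - x + x ^ 2 / 2) := by
    nlinarith [sq_nonneg (x ^ 2)]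
  have hsum : 0 ≤ Real.log (1 + x + x ^ 2 / 2) + Real.log (1 - x + x ^ 2 / 2) := by
    have := Real.log_nonneg hAB
    rwa [Real.log_mul hA.ne' hB.ne'] at this
  have hl2 := Real.log_two_gt_d9
  have hl2' := Real.log_two_lt_d9
  unfold catoni
  split_ifs with h1 h2 h3
  · constructor
    · nlinarith [sq_nonneg (x + 1)]
    · nlinarith [sq_nonneg (x + 1)]
  · constructor
    · linarith
    · linarith
  · constructor
    · linarith
    · linarith
  · push_neg at h1 h2 h3
    constructor
    · nlinarith [sq_nonneg (x - 1)]
    · nlinarith [sq_nonneg (x - 1)]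
end

section
/- Let {a_k}_{k≥0} be real coefficients satisfying |a_k| ≤ Ξ (k+1)^{−β} for all k ≥ 0, where Ξ > 0 and β > 1. Then for every k ≥ 0 the series ρ(k) = Σ_{j≥0} a_j a_{j+k} converges absolutely, and there exists a constant C > 0, depending only on Ξ and β, such that |ρ(k)| ≤ C (k + 1)^{−β} for all k ≥ 0. -/
/-- If `|a_k| ≤ Ξ (k+1)^{−β}` with `Ξ > 0` and `β > 1`, then for each `k` the
lag-`k` autocovariance `ρ(k) = Σ_{j≥0} a_j a_{j+k}` converges absolutely and
there is a constant `C > 0`, depending only on `Ξ` and `β`, with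
`|ρ(k)| ≤ C (k+1)^{−β}` for all `k ≥ 0`. -/
theorem autocovariance_polynomial_decay (Ξ β : ℝ) (hΞ : 0 < Ξ) (hβ : 1 < β) :
    ∃ C > 0, ∀ a : ℕ → ℝ, (∀ k : ℕ, |a k| ≤ Ξ * ((k : ℝ) + 1) ^ (-β)) →
      ∀ k : ℕ, Summable (fun j : ℕ => |a j * a (j + k)|) ∧
        |∑' j : ℕ, a j * a (j + k)| ≤ C * ((k : ℝ) + 1) ^ (-β) := by
  have hsum : Summable (fun j : ℕ => ((j : ℝ) + 1) ^ (-β)) := by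
    have h := Real.summable_nat_rpow.mpr (show (-β) < -1 by linarith)
    have h2 := (summable_nat_add_iff 1).mpr h
    simpa [Nat.cast_add] using h2
  set S := ∑' j : ℕ, ((j : ℝ) + 1) ^ (-β) with hS
  have hSpos : 0 < S :=
    Summable.tsum_pos hsum (fun i => by positivity) 0 (by positivity)
  refine ⟨Ξ ^ 2 * S, by positivity, fun a ha k => ?_⟩
  have hbound : ∀ j : ℕ, |a j * a (j + k)| ≤ Ξ ^ 2 * ((k : ℝ) + 1) ^ (-β) * ((j : ℝ) + 1) ^ (-β) := by
    intro j
    have h1 := ha j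
    have h2 := ha (j + k)
    have h3 : ((j + k : ℕ) : ℝ) + 1 = (j : ℝ) + (k : ℝ) + 1 := by push_cast; ring
    have h4 : ((j : ℝ) + (k : ℝ) + 1) ^ (-β) ≤ ((k : ℝ) + 1) ^ (-β) := by
      apply Real.rpow_le_rpow_of_nonpos (by positivity) (by linarith [show (0:ℝ) ≤ (j:ℝ) from Nat.cast_nonneg j]) (by linarith)
    rw [h3] at h2
    have h2' : |a (j + k)| ≤ Ξ * ((k : ℝ) + 1) ^ (-β) := by
      calc |a (j + k)| ≤ Ξ * ((j : ℝ) + (k : ℝ) + 1) ^ (-β) := h2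
        _ ≤ Ξ * ((k : ℝ) + 1) ^ (-β) := by
            exact mul_le_mul_of_nonneg_left h4 hΞ.le
    calc |a j * a (j + k)| = |a j| * |a (j + k)| := abs_mul _ _
      _ ≤ (Ξ * ((j : ℝ) + 1) ^ (-β)) * (Ξ * ((k : ℝ) + 1) ^ (-β)) :=
          mul_le_mul h1 h2' (abs_nonneg _) (by positivity)
      _ = Ξ ^ 2 * ((k : ℝ) + 1) ^ (-β) * ((j : ℝ) + 1) ^ (-β) := by ring
  have hsum2 : Summable (fun j : ℕ => Ξ ^ 2 * ((k : ℝ) + 1) ^ (-β) * ((j : ℝ) + 1) ^ (-β)) :=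
    hsum.mul_left _
  have habs : Summable (fun j : ℕ => |a j * a (j + k)|) :=
    Summable.of_nonneg_of_le (fun j => abs_nonneg _) hbound hsum2
  refine ⟨habs, ?_⟩
  have hnorm : |∑' j : ℕ, a j * a (j + k)| ≤ ∑' j : ℕ, |a j * a (j + k)| := by
    simpa only [Real.norm_eq_abs] using norm_tsum_le_tsum_norm (by simp only [Real.norm_eq_abs]; exact habs : Summable fun j : ℕ => ‖a j * a (j + k)‖)
  calc |∑' j : ℕ, a j * a (j + k)| ≤ ∑' j : ℕ, |a j * a (j + k)| := hnorm
    _ ≤ ∑' j : ℕ, Ξ ^ 2 * ((k : ℝ) + 1) ^ (-β) * ((j : ℝ) + 1) ^ (-β) :=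
        Summable.tsum_le_tsum hbound habs hsum2
    _ = Ξ ^ 2 * ((k : ℝ) + 1) ^ (-β) * S := by rw [tsum_mul_left]
    _ = Ξ ^ 2 * S * ((k : ℝ) + 1) ^ (-β) := by ring
end

section
/- Let {a_k}_{k∈ℤ} be real coefficients with a_k = 0 for k < 0 and |a_k| ≤ Ξ (k+1)^{−β} for all k ≥ 0, where Ξ > 0 and β > 2.5. For integers j ≥ 0, G ≥ 1 and k ∈ ℤ define the block coefficient E_{j,k} = Σ_{t = jG+1}^{(j+1)G} a_{t−k}. Then there exists a constant C > 0, depending only on Ξ and β, such that for all j ≥ 0 and G ≥ 1, Σ_{k ≤ (j+1)G} E_{j,k}² ≤ C G. -/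
/-!
Writing `E_k = ∑_{t ∈ T} a (t - k)` and `A = ∑ |a m|`, every `|E_k|` is at most `A`, while
`∑_k |E_k| ≤ ∑_{t ∈ T} ∑_k |a (t - k)| = |T| A`. Hence `∑_k E_k² ≤ A ∑_k |E_k| ≤ |T| A²`,
and the polynomial decay gives `A ≤ Ξ ∑_n (n + 1)^{-β} < ∞`.
-/

open Finset

section Shifts

variable {ι : Type*} [AddGroup ι] {a : ι → ℝ}

theorem sum_abs_comp_sub_le_tsum_abs (ha : Summable a) (T : Finset ι) (k : ι) :
    ∑ t ∈ T, |a (t - k)| ≤ ∑' m, |a m| :=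
  (Summable.sum_le_tsum T (fun _ _ => abs_nonneg _)
    ((Equiv.subRight k).summable_iff.mpr (summable_abs_iff.mpr ha))).trans_eq
    ((Equiv.subRight k).tsum_eq fun m => |a m|)

theorem summable_abs_comp_sub_left (ha : Summable a) (t : ι) : Summable fun k => |a (t - k)| :=
  (Equiv.subLeft t).summable_iff.mpr (summable_abs_iff.mpr ha)

theorem tsum_sum_abs_comp_sub (ha : Summable a) (T : Finset ι) :
    ∑' k, ∑ t ∈ T, |a (t - k)| = #T * ∑' m, |a m| := by
  rw [Summable.tsum_finsetSum fun t _ => summable_abs_comp_sub_left ha t]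
  have hshift (t : ι) : ∑' k, |a (t - k)| = ∑' m, |a m| :=
    (Equiv.subLeft t).tsum_eq fun m => |a m|
  simp only [hshift, sum_const, nsmul_eq_mul]

theorem summable_and_tsum_sq_sum_comp_sub_le (ha : Summable a) (T : Finset ι) :
    Summable (fun k => (∑ t ∈ T, a (t - k)) ^ 2) ∧
      ∑' k, (∑ t ∈ T, a (t - k)) ^ 2 ≤ #T * (∑' m, |a m|) ^ 2 := by
  set A := ∑' m, |a m|
  have hA : 0 ≤ A := tsum_nonneg fun _ => abs_nonneg _
  have hdom : ∀ k, (∑ t ∈ T, a (t - k)) ^ 2 ≤ A * ∑ t ∈ T, |a (t - k)| := fun k => by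
    have h := abs_sum_le_sum_abs (fun t => a (t - k)) T
    rw [← sq_abs, sq]
    exact mul_le_mul (h.trans (sum_abs_comp_sub_le_tsum_abs ha T k)) h (abs_nonneg _) hA
  have hdom_summable :=
    (summable_sum (s := T) fun t _ => summable_abs_comp_sub_left ha t).mul_left A
  have hsummable := Summable.of_nonneg_of_le (fun _ => sq_nonneg _) hdom hdom_summable
  refine ⟨hsummable, ?_⟩
  calc ∑' k, (∑ t ∈ T, a (t - k)) ^ 2
      ≤ ∑' k, A * ∑ t ∈ T, |a (t - k)| := hsummable.tsum_le_tsum hdom hdom_summable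
    _ = #T * A ^ 2 := by rw [tsum_mul_left, tsum_sum_abs_comp_sub ha T]; ring

end Shifts

theorem summable_nat_add_one_rpow_neg {p : ℝ} (hp : 1 < p) :
    Summable fun n : ℕ => ((n : ℝ) + 1) ^ (-p) := by
  have h := (summable_nat_add_iff 1).mpr (Real.summable_nat_rpow.mpr (neg_lt_neg hp))
  exact_mod_cast h

theorem Int.summable_and_tsum_abs_le_of_eq_zero_of_neg {a : ℤ → ℝ} {b : ℕ → ℝ}
    (hb : Summable b) (ha : ∀ k < 0, a k = 0) (hab : ∀ n : ℕ, |a n| ≤ b n) :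
    Summable a ∧ ∑' k, |a k| ≤ ∑' n, b n := by
  have hrange : ∀ k ∉ Set.range ((↑) : ℕ → ℤ), a k = 0 := fun k hk =>
    ha k (not_le.mp fun hk0 => hk ⟨k.toNat, Int.toNat_of_nonneg hk0⟩)
  have habs : Summable fun n : ℕ => |a n| := hb.of_nonneg_of_le (fun _ => abs_nonneg _) hab
  refine ⟨(Nat.cast_injective.summable_iff hrange).mp (summable_abs_iff.mp habs), ?_⟩
  rw [← Nat.cast_injective.tsum_eq (f := fun k : ℤ => |a k|) fun k hk =>
    by_contra fun hk' => hk (by simp only [hrange k hk', abs_zero])]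
  exact habs.tsum_le_tsum hab hb

/-- For coefficients `a_k` vanishing for `k < 0` and with `|a_k| ≤ Ξ (k+1)^{−β}` for `k ≥ 0`,
where `β > 2.5`, the block coefficients `E_{j,k} = Σ_{t=jG+1}^{(j+1)G} a_{t−k}` satisfy
`Σ_{k ≤ (j+1)G} E_{j,k}² ≤ C G` for a constant `C > 0` depending only on `Ξ` and `β`. -/
theorem block_coefficient_sq_sum_bound (Ξ β : ℝ) (hΞ : 0 < Ξ) (hβ : 2.5 < β) :
    ∃ C > 0, ∀ a : ℤ → ℝ,
      (∀ k : ℤ, k < 0 → a k = 0) →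
      (∀ k : ℤ, 0 ≤ k → |a k| ≤ Ξ * ((k : ℝ) + 1) ^ (-β)) →
      ∀ j G : ℤ, 0 ≤ j → 1 ≤ G →
        Summable (fun k : {k : ℤ // k ≤ (j + 1) * G} =>
          (∑ t ∈ Finset.Icc (j * G + 1) ((j + 1) * G), a (t - (k : ℤ))) ^ 2) ∧
        ∑' k : {k : ℤ // k ≤ (j + 1) * G},
            (∑ t ∈ Finset.Icc (j * G + 1) ((j + 1) * G), a (t - (k : ℤ))) ^ 2
          ≤ C * (G : ℝ) := by
  have hb := (summable_nat_add_one_rpow_neg (by linarith : (1 : ℝ) < β)).mul_left Ξ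
  have hb_pos : 0 < ∑' n : ℕ, Ξ * ((n : ℝ) + 1) ^ (-β) :=
    hb.tsum_pos (fun _ => by positivity) 0 (by positivity)
  refine ⟨(∑' n : ℕ, Ξ * ((n : ℝ) + 1) ^ (-β)) ^ 2, by positivity, ?_⟩
  intro a ha0 hdecay j G _ hG
  obtain ⟨ha, hA⟩ := Int.summable_and_tsum_abs_le_of_eq_zero_of_neg hb ha0
    fun n => by simpa using hdecay n n.cast_nonneg
  obtain ⟨hsq, hle⟩ :=
    summable_and_tsum_sq_sum_comp_sub_le ha (Icc (j * G + 1) ((j + 1) * G))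
  have hcard : (#(Icc (j * G + 1) ((j + 1) * G)) : ℝ) = G := by
    rw [Int.card_Icc, show (j + 1) * G + 1 - (j * G + 1) = G by ring, ← Int.cast_natCast,
      Int.toNat_of_nonneg (by omega : 0 ≤ G)]
  refine ⟨hsq.subtype _,
    (hsq.tsum_subtype_le _ {k | k ≤ (j + 1) * G} (fun _ => sq_nonneg _)).trans (hle.trans ?_)⟩
  rw [hcard, mul_comm]
  gcongr
end

section
/- Let ξ̃ ∈ ℝ, v > 0, γ² ≥ 0 and Δ ≥ 0 satisfy v² γ² + 2 v Δ ≤ 1, and define B⁺(u) = ξ̃ − u + (v/2)[(ξ̃ − u)² + γ²] + Δ for u ∈ ℝ. Then B⁺ has a real root; moreover its smallest root u⁺ = ξ̃ + (1 − √(1 − v²γ² − 2vΔ))/v satisfies ξ̃ ≤ u⁺ ≤ ξ̃ + v γ² + 2 Δ. -/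
/-- For the upper envelope `B⁺(u) = ξ̃ − u + (v/2)[(ξ̃ − u)² + γ²] + Δ` arising in Catoni-type
robust M-estimation, if `v²γ² + 2vΔ ≤ 1` then `B⁺` has a real root; its smallest root
`u⁺ = ξ̃ + (1 − √(1 − v²γ² − 2vΔ))/v` satisfies `ξ̃ ≤ u⁺ ≤ ξ̃ + vγ² + 2Δ`. -/
theorem catoni_envelope_smallest_root
    (ξbar v γsq Δ : ℝ) (hv : 0 < v) (hγ : 0 ≤ γsq) (hΔ : 0 ≤ Δ)
    (hcond : v ^ 2 * γsq + 2 * v * Δ ≤ 1)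
    (B : ℝ → ℝ) (hB : ∀ u, B u = ξbar - u + v / 2 * ((ξbar - u) ^ 2 + γsq) + Δ)
    (uplus : ℝ)
    (huplus : uplus = ξbar + (1 - Real.sqrt (1 - v ^ 2 * γsq - 2 * v * Δ)) / v) :
    B uplus = 0 ∧ (∀ u : ℝ, B u = 0 → uplus ≤ u) ∧
      ξbar ≤ uplus ∧ uplus ≤ ξbar + v * γsq + 2 * Δ := by
  set s := Real.sqrt (1 - v ^ 2 * γsq - 2 * v * Δ) with hsdef
  have hA : (0:ℝ) ≤ 1 - v ^ 2 * γsq - 2 * v * Δ := by linarith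
  have hs2 : s ^ 2 = 1 - v ^ 2 * γsq - 2 * v * Δ := Real.sq_sqrt hA
  have hs0 : 0 ≤ s := Real.sqrt_nonneg _
  have hs1 : s ≤ 1 := by
    nlinarith [hs2, hs0, sq_nonneg v, mul_pos hv hv, sq_nonneg (v*Δ),
      mul_nonneg (mul_nonneg hv.le hv.le) hγ, mul_nonneg hv.le hΔ]
  have hv' : v ≠ 0 := ne_of_gt hv
  refine ⟨?_, ?_, ?_, ?_⟩
  · rw [hB, huplus]
    field_simp
    nlinarith [hs2]
  · intro u hu
    by_contra h
    push_neg at h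
    rw [hB] at hu
    have h1 : v * (ξbar - u) + 1 - s > 0 := by
      have : v * (uplus - u) > 0 := mul_pos hv (by linarith)
      rw [huplus] at this
      have hexp : v * (ξbar + (1 - s) / v - u) = v * (ξbar - u) + (1 - s) := by
        field_simp; ring
      rw [hexp] at this
      linarith
    have h2 : v * (ξbar - u) + 1 + s > 0 := by linarith
    nlinarith [mul_pos h1 h2, hs2, hu]
  · rw [huplus]
    have : 0 ≤ (1 - s) / v := div_nonneg (by linarith) hv.le
    linarith
  · rw [huplus]
    have : (1 - s) / v ≤ v * γsq + 2 * Δ := by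
      rw [div_le_iff₀ hv]
      nlinarith [hs2, mul_nonneg hs0 (by linarith : (0:ℝ) ≤ 1 - s)]
    linarith
end
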